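/- arXiv:1903.11541 — 3 statements merged into one kernel-verified Lean document; each statement's English description precedes it below -/
import Mathlib

section
/- For 0 ≤ j < n and j+1 ≤ k ≤ n, the intersection L_k ∩ R_{n,j} is contained in the intersection of the k−j+1 hyperplanes L_j, H_{j+1}, ..., H_k of ℙ^n, which are linearly independent; consequently the real dimension of L_k ∩ R_{n,j} is at most 2n + j − n − 2 − (k−j), strictly less than dim R_{n,j} − 2 = n + j − 2 when k > j, so the current intersection ⟦L_k⟧ ∩ ⟦R_{n,j}⟧ vanishes. -/
/-!
Write `E_r = z_0 + ⋯ + z_r`. On `R_{n,j}` each `z_r` (`r > j`) is a real multiple of `E_r`, so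
`E_r = 0` forces `z_r = 0` and hence `E_{r-1} = E_r - z_r = 0`. Starting from `E_k = 0` on `L_k`
and descending to `r = j` gives `ε_j = 0` and `z_{j+1} = ⋯ = z_k = 0`. The forms
`ε_j, z_{j+1}, …, z_k` are independent because the basis vectors `e_0, e_{j+1}, …, e_k` form a
dual system for them.
-/

theorem linearIndependent_of_apply_eq_single {R M ι : Type*} [CommSemiring R] [AddCommMonoid M]
    [Module R M] [DecidableEq ι] {f : ι → M →ₗ[R] R} (v : ι → M)
    (h : ∀ i i', f i (v i') = Pi.single (M := fun _ => R) i 1 i') : LinearIndependent R f := by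
  refine LinearIndependent.of_comp (LinearMap.pi fun i => LinearMap.applyₗ (v i)) ?_
  have hcomp : (LinearMap.pi fun i => LinearMap.applyₗ (v i)) ∘ f = fun i => Pi.single i 1 := by
    ext i i'
    simp [h]
  rw [hcomp]
  exact Pi.linearIndependent_single_one ι R

theorem Fin.sum_single_castLE {R : Type*} [AddCommMonoid R] {j n : ℕ} (h : j + 1 ≤ n + 1)
    (a : Fin (n + 1)) (c : R) :
    ∑ i : Fin (j + 1), Pi.single (M := fun _ => R) a c (Fin.castLE h i) =
      if (a : ℕ) ≤ j then c else 0 := by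
  split_ifs with ha
  · rw [Fintype.sum_eq_single ⟨a, by omega⟩ fun i hi => ?_]
    · simp
    · simp only [ne_eq, Fin.ext_iff] at hi
      simp only [Pi.single_apply, Fin.ext_iff, Fin.val_castLE]
      grind
  · refine Finset.sum_eq_zero fun i _ => ?_
    simp only [Pi.single_apply, Fin.ext_iff, Fin.val_castLE]
    grind

section PartialSum

variable {M : Type*} [AddCommMonoid M] {n : ℕ}

def partialSum (z : Fin (n + 1) → M) (r : ℕ) : M :=
  ∑ i : Fin (n + 1), if (i : ℕ) ≤ r then z i else 0

theorem partialSum_succ (z : Fin (n + 1) → M) {r : ℕ} (hr : r + 1 < n + 1) :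
    partialSum z (r + 1) = partialSum z r + z ⟨r + 1, hr⟩ := by
  have hsplit : ∀ i : Fin (n + 1), (if (i : ℕ) ≤ r + 1 then z i else 0) =
      (if (i : ℕ) ≤ r then z i else 0) + if i = ⟨r + 1, hr⟩ then z i else 0 := by
    intro i
    simp only [Fin.ext_iff]
    split_ifs <;> first | omega | simp
  simp only [partialSum, hsplit, Finset.sum_add_distrib, Finset.sum_ite_eq', Finset.mem_univ,
    if_true]

theorem partialSum_eq_zero_of_le (z : Fin (n + 1) → M) {j k : ℕ} (hkn : k ≤ n)
    (hk : partialSum z k = 0)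
    (hz : ∀ r (hr : r < n + 1), j < r → r ≤ k → partialSum z r = 0 → z ⟨r, hr⟩ = 0)
    {r : ℕ} (hjr : j ≤ r) (hrk : r ≤ k) : partialSum z r = 0 := by
  refine Nat.decreasingInduction' (fun m hmk hrm hE => ?_) hrk hk
  have hm : m + 1 < n + 1 := by omega
  have := partialSum_succ z hm
  rwa [hE, hz (m + 1) hm (by omega) (by omega) hE, add_zero, eq_comm] at this

end PartialSum

/-- For `0 ≤ j < n` and `j+1 ≤ k ≤ n`, every point of `L_k ∩ R_{n,j}`
(in homogeneous coordinates on `ℙ^n`, i.e. on the affine cone) lies in the common zero set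
of the `k−j+1` hyperplanes `L_j, H_{j+1}, ..., H_k`, and the corresponding `k−j+1` linear
forms `ε_j, z_{j+1}, ..., z_k` are linearly independent.  (Consequently the semi-algebraic
intersection has real codimension at least `k−j+1` more than a hyperplane section of
`R_{n,j}`, so the current intersection `⟦L_k⟧ ∩ ⟦R_{n,j}⟧` vanishes.) -/
theorem stmt_3 (n j k : ℕ) (hjk : j + 1 ≤ k) (hkn : k ≤ n) :
    (∀ z : Fin (n+1) → ℂ,
      (∑ i : Fin (n+1), if (i : ℕ) ≤ k then z i else 0) = 0 →
      (∀ r : Fin (n+1), j + 1 ≤ (r : ℕ) → (r : ℕ) ≤ n →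
        ∃ t : ℝ, 0 ≤ t ∧ t ≤ 1 ∧
          z r = (t : ℂ) * ∑ i : Fin (n+1), if (i : ℕ) ≤ (r : ℕ) then z i else 0) →
      ((∑ i : Fin (n+1), if (i : ℕ) ≤ j then z i else 0) = 0 ∧
        ∀ r : Fin (n+1), j + 1 ≤ (r : ℕ) → (r : ℕ) ≤ k → z r = 0)) ∧
    LinearIndependent ℂ (fun m : Fin (k - j + 1) =>
      if (m : ℕ) = 0 then
        ∑ i : Fin (j+1), (LinearMap.proj (Fin.castLE (by omega) i) :
          (Fin (n+1) → ℂ) →ₗ[ℂ] ℂ)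
      else (LinearMap.proj ⟨j + (m : ℕ), by have := m.isLt; omega⟩ :
          (Fin (n+1) → ℂ) →ₗ[ℂ] ℂ)) := by
  refine ⟨fun z hk hS => ?_, ?_⟩
  · have hz : ∀ r (hr : r < n + 1), j < r → r ≤ k → partialSum z r = 0 → z ⟨r, hr⟩ = 0 := by
      intro r hr hjr hrk hE
      obtain ⟨t, -, -, hzr⟩ := hS ⟨r, hr⟩ hjr (by omega)
      rw [hzr]
      exact mul_eq_zero_of_right _ hE
    have hE : ∀ {r}, j ≤ r → r ≤ k → partialSum z r = 0 :=
      partialSum_eq_zero_of_le z hkn hk hz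
    exact ⟨hE le_rfl (by omega), fun r hjr hrk => hz r r.isLt hjr hrk (hE (by omega) hrk)⟩
  · refine linearIndependent_of_apply_eq_single (fun m : Fin (k - j + 1) =>
      Pi.single (if (m : ℕ) = 0 then 0 else ⟨j + m, by omega⟩) (1 : ℂ)) fun m m' => ?_
    by_cases hm : (m : ℕ) = 0 <;> by_cases hm' : (m' : ℕ) = 0 <;>
      simp only [hm, hm', if_true, if_false, LinearMap.sum_apply, LinearMap.proj_apply,
        Fin.sum_single_castLE] <;>
      simp only [Pi.single_apply, Fin.ext_iff, Fin.val_zero, hm, hm', if_true, if_false] <;>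
      split_ifs <;> first | rfl | omega
end

section
/- Every proper Zariski closed subset Z ⊊ ℙ^n has measure zero with respect to the measure ‖R_{n,j}‖ associated to the semi-algebraic integral current ⟦R_{n,j}⟧, for all 0 ≤ j ≤ n. In particular, since R_{n,j} contains the real topological simplex Δ̂^n, R_{n,j} is Zariski dense in ℙ^n, and Z ∩ R_{n,j} is a semi-algebraic subset of dimension strictly less than n + j = dim_ℝ R_{n,j}. -/
/-!
The set `R` lies in the real affine subspace `A = {∑ z = 1, z_r ∈ ℝ for r > j}`, of real
dimension `n + j`: the partial sum `S_r = 1 - ∑_{i > r} z_i` is real once the later `z_i` are,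
and then so is `z_r = t S_r`. Parametrize `A` by an affine map `ψ` from `ℝ^{n+j}`. Since `ψ` is
Lipschitz, it maps Lebesgue-null sets to `μH^{n+j}`-null sets. A nonzero homogeneous `P` does not
vanish at every real point of `{∑ z = 1} ⊆ A` (rescale a real point where `P · ∑ z_i ≠ 0`), so
`P ∘ ψ` is a nonzero polynomial, and the real zero set of a nonzero polynomial is Lebesgue-null
(by Fubini and induction on the number of variables).
-/

open MeasureTheory

namespace MvPolynomial

variable {𝕜 : Type*} [RCLike 𝕜]

theorem measurableSet_setOf_eval_ofReal_eq_zero {ι : Type*} [Countable ι] (Q : MvPolynomial ι 𝕜) :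
    MeasurableSet {x : ι → ℝ | eval (fun i => (x i : 𝕜)) Q = 0} :=
  (isClosed_eq ((continuous_eval Q).comp (continuous_pi fun i =>
    RCLike.continuous_ofReal.comp (continuous_apply i))) continuous_const).measurableSet

theorem finite_setOf_eval_ofReal_cons_eq_zero {m k : ℕ} {Q : MvPolynomial (Fin (m + 1)) 𝕜}
    {w : Fin m → ℝ} (hw : eval (fun i => (w i : 𝕜)) ((finSuccEquiv 𝕜 m Q).coeff k) ≠ 0) :
    {t : ℝ | eval (fun i => ((Fin.cons t w : Fin (m + 1) → ℝ) i : 𝕜)) Q = 0}.Finite := by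
  set q := Polynomial.map (eval fun i => (w i : 𝕜)) (finSuccEquiv 𝕜 m Q)
  have hq : q ≠ 0 := fun h => hw (by simpa [q] using congrArg (Polynomial.coeff · k) h)
  refine ((Polynomial.finite_setOfPred_isRoot hq).preimage RCLike.ofReal_injective.injOn).subset ?_
  intro t ht
  have hcons : (fun i => ((Fin.cons t w : Fin (m + 1) → ℝ) i : 𝕜))
      = Fin.cons (t : 𝕜) (fun i => (w i : 𝕜)) :=
    Fin.comp_cons (fun x : ℝ => (x : 𝕜)) t w
  simpa [hcons, eval_eq_eval_mv_eval', q] using ht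

theorem volume_setOf_eval_ofReal_eq_zero_fin :
    ∀ {m : ℕ} {Q : MvPolynomial (Fin m) 𝕜}, Q ≠ 0 →
      volume {x : Fin m → ℝ | eval (fun i => (x i : 𝕜)) Q = 0} = 0
  | 0, Q, hQ => by
    rw [eq_C_of_isEmpty Q] at hQ ⊢
    simp_all
  | m + 1, Q, hQ => by
    obtain ⟨k, hk⟩ : ∃ k, (finSuccEquiv 𝕜 m Q).coeff k ≠ 0 := by
      by_contra! h
      exact hQ ((finSuccEquiv 𝕜 m).injective (by ext1 k; simp [h k]))
    set e := MeasurableEquiv.piFinSuccAbove (fun _ : Fin (m + 1) => ℝ) 0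
    set s := e.symm ⁻¹' {x | eval (fun i => (x i : 𝕜)) Q = 0}
    have hs : MeasurableSet s :=
      e.symm.measurable (measurableSet_setOf_eval_ofReal_eq_zero Q)
    have hae : ∀ᵐ w : Fin m → ℝ, volume ((fun t => (t, w)) ⁻¹' s) = 0 := by
      filter_upwards [measure_eq_zero_iff_ae_notMem.mp
        (volume_setOf_eval_ofReal_eq_zero_fin hk)] with w hw
      refine (finite_setOf_eval_ofReal_cons_eq_zero hw).measure_zero _ |> measure_mono_null ?_
      intro t ht
      simpa [s, e, Fin.insertNth_zero'] using ht
    calc volume {x : Fin (m + 1) → ℝ | eval (fun i => (x i : 𝕜)) Q = 0}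
        = volume (e ⁻¹' s) := by simp [s]
      _ = (volume.prod volume) s :=
        (volume_preserving_piFinSuccAbove (fun _ => ℝ) 0).measure_preimage hs.nullMeasurableSet
      _ = 0 := by rw [Measure.prod_apply_symm hs, lintegral_congr_ae hae, lintegral_zero]

theorem volume_setOf_eval_ofReal_eq_zero {ι : Type*} [Fintype ι] {Q : MvPolynomial ι 𝕜}
    (hQ : Q ≠ 0) : volume {x : ι → ℝ | eval (fun i => (x i : 𝕜)) Q = 0} = 0 := by
  set e := Fintype.equivFin ι
  set f := MeasurableEquiv.piCongrLeft (fun _ => ℝ) e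
  have hpre : {x : ι → ℝ | eval (fun i => (x i : 𝕜)) Q = 0}
      = f ⁻¹' {y | eval (fun i => (y i : 𝕜)) (rename e Q) = 0} := by
    ext x
    simp [f, eval_rename, Function.comp_def, MeasurableEquiv.coe_piCongrLeft,
      Equiv.piCongrLeft_apply_apply]
  rw [hpre, (volume_measurePreserving_piCongrLeft (fun _ => ℝ) e).measure_preimage
    (measurableSet_setOf_eval_ofReal_eq_zero _).nullMeasurableSet]
  exact volume_setOf_eval_ofReal_eq_zero_fin
    ((rename_injective e e.injective).ne_iff' (map_zero _) |>.mpr hQ)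

theorem exists_eval_ofReal_ne_zero {ι : Type*} [Fintype ι] {Q : MvPolynomial ι 𝕜}
    (hQ : Q ≠ 0) : ∃ x : ι → ℝ, eval (fun i => (x i : 𝕜)) Q ≠ 0 := by
  by_contra! h
  have := volume_setOf_eval_ofReal_eq_zero hQ
  simp only [h, Set.ofPred_true, Measure.measure_univ_eq_zero] at this
  exact NeZero.ne _ this

theorem IsHomogeneous.eval_smul {σ R : Type*} [CommSemiring R] {P : MvPolynomial σ R} {d : ℕ}
    (hP : P.IsHomogeneous d) (c : R) (z : σ → R) : eval (c • z) P = c ^ d * eval z P := by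
  rw [eval_eq, eval_eq, Finset.mul_sum]
  refine Finset.sum_congr rfl fun m hm => ?_
  have hdeg : ∑ i ∈ m.support, m i = d := by
    simpa [Finsupp.weight_apply, Finsupp.sum] using hP (mem_support_iff.mp hm)
  simp only [Pi.smul_apply, smul_eq_mul, mul_pow, Finset.prod_mul_distrib,
    Finset.prod_pow_eq_pow_sum, hdeg]
  ring

theorem IsHomogeneous.exists_eval_ofReal_ne_zero_of_sum_eq_one {σ : Type*} [Fintype σ]
    [Nonempty σ] {P : MvPolynomial σ 𝕜} {d : ℕ} (hP : P.IsHomogeneous d) (hP0 : P ≠ 0) :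
    ∃ x : σ → ℝ, ∑ i, x i = 1 ∧ eval (fun i => (x i : 𝕜)) P ≠ 0 := by
  have hsum : (∑ i, X i : MvPolynomial σ 𝕜) ≠ 0 := fun h => by
    simpa using congrArg (eval fun _ => (1 : 𝕜)) h
  obtain ⟨x, hx⟩ := exists_eval_ofReal_ne_zero (mul_ne_zero hP0 hsum)
  rw [map_mul, map_sum] at hx
  simp only [eval_X] at hx
  have hs : ∑ i, x i ≠ 0 := fun h => hx (by simp [← RCLike.ofReal_sum, h])
  refine ⟨(∑ i, x i)⁻¹ • x, by simp [← Finset.mul_sum, hs], ?_⟩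
  have : (fun i => (((∑ i, x i)⁻¹ • x) i : 𝕜)) = ((∑ i, x i : ℝ)⁻¹ : 𝕜) • fun i => (x i : 𝕜) := by
    ext i; simp
  rw [this, hP.eval_smul]
  exact mul_ne_zero (pow_ne_zero _ (inv_ne_zero (RCLike.ofReal_ne_zero.mpr hs)))
    (left_ne_zero_of_mul hx)

theorem exists_eval_ofReal_eq_eval_add_linearMap {ι σ : Type*} [Fintype ι]
    (P : MvPolynomial σ 𝕜) (b : σ → 𝕜) (L : (ι → ℝ) →ₗ[ℝ] (σ → 𝕜)) :
    ∃ Q : MvPolynomial ι 𝕜, ∀ p : ι → ℝ, eval (fun i => (p i : 𝕜)) Q = eval (b + L p) P := by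
  classical
  refine ⟨bind₁ (fun r => C (b r) + ∑ i, C (L (fun j => if i = j then 1 else 0) r) * X i) P,
    fun p => ?_⟩
  rw [eval, eval₂Hom_bind₁, L.pi_apply_eq_sum_univ p, eval]
  congr 2 with r
  simp [RCLike.real_smul_eq_coe_mul, mul_comm]

end MvPolynomial

open MvPolynomial in
theorem hausdorffMeasure_range_inter_setOf_eval_eq_zero {𝕜 ι σ : Type*} [RCLike 𝕜] [Fintype ι]
    [Fintype σ] {P : MvPolynomial σ 𝕜} (b : σ → 𝕜) (L : (ι → ℝ) →ₗ[ℝ] (σ → 𝕜))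
    (hP : ∃ p, eval (b + L p) P ≠ 0) :
    μH[Fintype.card ι] (Set.range (fun p => b + L p) ∩ {z | eval z P = 0}) = 0 := by
  obtain ⟨Q, hQ⟩ := exists_eval_ofReal_eq_eval_add_linearMap P b L
  have hQ0 : Q ≠ 0 := by
    rintro rfl
    obtain ⟨p, hp⟩ := hP
    simp [← hQ] at hp
  have hLip : LipschitzWith ‖L.toContinuousLinearMap‖₊ (fun p => b + L p) := by
    simpa using (LipschitzWith.const b).add L.toContinuousLinearMap.lipschitz
  rw [Set.inter_comm, ← Set.image_preimage_eq_inter_range]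
  refine le_antisymm ((hLip.hausdorffMeasure_image_le (Nat.cast_nonneg _) _).trans ?_) bot_le
  rw [hausdorffMeasure_pi_real]
  simp [← hQ, volume_setOf_eval_ofReal_eq_zero hQ0]

theorem im_eq_zero_of_eq_ofReal_mul_partialSum {n j : ℕ} {z : Fin (n + 1) → ℂ}
    (hz1 : ∑ i, z i = 1)
    (hz : ∀ r : Fin (n + 1), j + 1 ≤ (r : ℕ) →
      ∃ t : ℝ, z r = t * ∑ i : Fin (n + 1), if (i : ℕ) ≤ (r : ℕ) then z i else 0) :
    ∀ r : Fin (n + 1), j < (r : ℕ) → (z r).im = 0 := by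
  intro r
  induction r using WellFoundedGT.induction with
  | _ r ih =>
    intro hr
    obtain ⟨t, ht⟩ := hz r hr
    have hS : (∑ i : Fin (n + 1), if (i : ℕ) ≤ (r : ℕ) then z i else 0).im = 0 := by
      calc (∑ i : Fin (n + 1), if (i : ℕ) ≤ (r : ℕ) then z i else 0).im
          = ∑ i, (z i).im := by
            rw [Complex.im_sum]
            refine Finset.sum_congr rfl fun i _ => ?_
            split_ifs with hi
            · rfl
            · rw [Complex.zero_im, ih i (by omega) (by omega)]
        _ = 0 := by rw [← Complex.im_sum, hz1, Complex.one_im]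
    rw [ht, Complex.im_ofReal_mul, hS, mul_zero]

/-- Together with `consNegSum` and the base point `Pi.single 0 1`, this parametrizes
`{z | ∑ z = 1 ∧ ∀ r > j, (z r).im = 0}`: `p (.inl k)` and `p (.inr k)` are the real and
imaginary parts of `z (k + 1)`, and `z 0` is determined by `∑ z = 1`. -/
def reImLinear (n j : ℕ) : (Fin n ⊕ Fin j → ℝ) →ₗ[ℝ] (Fin n → ℂ) where
  toFun p k := ⟨p (.inl k), if h : (k : ℕ) < j then p (.inr ⟨k, h⟩) else 0⟩
  map_add' p q := by
    funext k
    apply Complex.ext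
    · rfl
    · dsimp; split_ifs <;> simp
  map_smul' c p := by
    funext k
    apply Complex.ext
    · simp
    · dsimp; split_ifs <;> simp

def consNegSum (n : ℕ) : (Fin n → ℂ) →ₗ[ℝ] (Fin (n + 1) → ℂ) where
  toFun w := Fin.cons (-∑ k, w k) w
  map_add' v w := by
    ext r
    refine Fin.cases ?_ (fun k => ?_) r <;> simp [Finset.sum_add_distrib]; ring
  map_smul' c w := by
    ext r
    refine Fin.cases ?_ (fun k => ?_) r <;> simp [Finset.mul_sum]

theorem mem_range_add_consNegSum_reImLinear {n j : ℕ} {z : Fin (n + 1) → ℂ}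
    (hz1 : ∑ i, z i = 1) (hz : ∀ r : Fin (n + 1), j < (r : ℕ) → (z r).im = 0) :
    z ∈ Set.range fun p => Pi.single 0 1 + consNegSum n (reImLinear n j p) := by
  refine ⟨Sum.elim (fun k => (z k.succ).re)
    (fun k => if h : (k : ℕ) < n then (z (Fin.succ ⟨k, h⟩)).im else 0), ?_⟩
  have htail : reImLinear n j (Sum.elim (fun k => (z k.succ).re)
      (fun k => if h : (k : ℕ) < n then (z (Fin.succ ⟨k, h⟩)).im else 0)) = Fin.tail z := by
    funext k
    apply Complex.ext
    · rfl
    · dsimp [reImLinear]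
      split_ifs with hkj hkn
      · rfl
      · exact absurd k.isLt hkn
      · exact (hz k.succ (by simp; omega)).symm
  have h0 : z 0 = 1 - ∑ k, Fin.tail z k := by
    rw [← hz1, Fin.sum_univ_succ]
    simp [Fin.tail]
  simp only [htail]
  funext r
  refine Fin.cases ?_ (fun k => ?_) r
  · simp [consNegSum, h0, sub_eq_add_neg]
  · simp [consNegSum, Fin.tail]

theorem stmt_4_general (n j : ℕ)
    (R : Set (Fin (n+1) → ℂ))
    (hR : R = {z | (∑ i, z i) = 1 ∧
      ∀ r : Fin (n+1), j + 1 ≤ (r : ℕ) →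
        ∃ t : ℝ, 0 ≤ t ∧ t ≤ 1 ∧
          z r = (t : ℂ) * ∑ i : Fin (n+1), if (i : ℕ) ≤ (r : ℕ) then z i else 0}) :
    ∀ (d : ℕ) (P : MvPolynomial (Fin (n+1)) ℂ), P.IsHomogeneous d → P ≠ 0 →
      (μH[((n + j : ℕ) : ℝ)] : Measure (Fin (n+1) → ℂ)).restrict R
        {z | MvPolynomial.eval z P = 0} = 0 := by
  intro d P hP hP0
  set L := consNegSum n ∘ₗ reImLinear n j
  have hR_sub : R ⊆ Set.range fun p => Pi.single 0 1 + L p := by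
    rw [hR]
    rintro z ⟨hz1, hz⟩
    exact mem_range_add_consNegSum_reImLinear hz1
      (im_eq_zero_of_eq_ofReal_mul_partialSum hz1 fun r hr => (hz r hr).imp fun _ ht => ht.2.2)
  obtain ⟨x, hx1, hxP⟩ := hP.exists_eval_ofReal_ne_zero_of_sum_eq_one hP0
  obtain ⟨p, hp⟩ := mem_range_add_consNegSum_reImLinear (z := fun i => (x i : ℂ)) (j := j)
    (by rw [← Complex.ofReal_sum, hx1, Complex.ofReal_one]) (by simp)
  have hnull := hausdorffMeasure_range_inter_setOf_eval_eq_zero (Pi.single 0 1) L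
    ⟨p, by simpa [L, hp] using hxP⟩
  rw [Fintype.card_sum, Fintype.card_fin, Fintype.card_fin] at hnull
  rw [Measure.restrict_apply
    (isClosed_eq (MvPolynomial.continuous_eval P) continuous_const).measurableSet]
  refine measure_mono_null ?_ hnull
  exact fun _ hz => ⟨hR_sub hz.2, hz.1⟩

/-- Every proper Zariski closed subset of `ℙ^n` (i.e. the zero set of a nonzero
homogeneous polynomial) has measure zero for the measure `‖R_{n,j}‖` associated to the
semi-algebraic current `⟦R_{n,j}⟧`, realized here (in the affine chart `Δ^n = {∑ z = 1}`)
as the `(n+j)`-dimensional Hausdorff measure restricted to `R_{n,j}`. -/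
theorem stmt_4 (n j : ℕ) (hj : j ≤ n)
    (R : Set (Fin (n+1) → ℂ))
    (hR : R = {z | (∑ i, z i) = 1 ∧
      ∀ r : Fin (n+1), j + 1 ≤ (r : ℕ) →
        ∃ t : ℝ, 0 ≤ t ∧ t ≤ 1 ∧
          z r = (t : ℂ) * ∑ i : Fin (n+1), if (i : ℕ) ≤ (r : ℕ) then z i else 0}) :
    ∀ (d : ℕ) (P : MvPolynomial (Fin (n+1)) ℂ), P.IsHomogeneous d → P ≠ 0 →
      (μH[((n + j : ℕ) : ℝ)] : Measure (Fin (n+1) → ℂ)).restrict R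
        {z | MvPolynomial.eval z P = 0} = 0 :=
  stmt_4_general n j R hR
end

section
/- Let p ∈ F[t_1,...,t_n], F ⊂ ℂ, and consider the affine simplex Δ^{n+1} = {z ∈ ℂ^{n+2} : z_0 + ··· + z_{n+1} = 1}. Define ψ : Δ^{n+1} − Y_p → U_p by ψ(z) = (t(z); (z_{n+1}/(1 − z_{n+1})) p(t(z))) with t(z) = (ε_0(z)/z_1, ..., ε_{n-1}(z)/z_n), and define φ : U_p − 𝒢_p → Δ^{n+1} by z_0(t;λ) = (∏_{r=1}^n t_r/(1+t_r)) · p(t)/(p(t)+λ), z_j(t;λ) = (1/(1+t_j)) (∏_{r=j+1}^n t_r/(1+t_r)) · p(t)/(p(t)+λ) for 1 ≤ j ≤ n, and z_{n+1}(t;λ) = λ/(p(t)+λ). Then φ is a two-sided inverse of ψ onto its image: ψ ∘ φ = id on U_p − 𝒢_p and φ ∘ ψ = id on Δ^{n+1} − Y_p; in particular the image of ψ is U_p − 𝒢_p. -/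
/-!
Write `ε_j = z_0 + ⋯ + z_j` (`prefixSum z j`). Then `t_j = ε_{j-1}/z_j` gives
`1 + t_j = ε_j/z_j`, so `t_j/(1 + t_j) = ε_{j-1}/ε_j` and the products in `φ` telescope:
`∏_{r>j} t_r/(1 + t_r) = ε_j/ε_n`. On the simplex `1 - z_{n+1} = ε_n`, hence `p/(p + λ) = ε_n`
for `λ = ψ(z)_{n+1}`, and `φ(ψ z)_j = (z_j/ε_j)(ε_j/ε_n)ε_n = z_j`. Conversely the partial sums
of `φ(t;λ)` are `ε_j = p/(p + λ) · ∏_{r>j} t_r/(1 + t_r)` for `j ≤ n` and `ε_{n+1} = 1`, from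
which `ψ(φ(t;λ)) = (t;λ)` is read off in the same way.
-/

open MvPolynomial

section PrefixSuffix

variable {M : Type*}

def prefixSum [AddCommMonoid M] {N : ℕ} (z : Fin N → M) (m : ℕ) : M :=
  ∑ i : Fin N, if (i : ℕ) ≤ m then z i else 0

def suffixProd [CommMonoid M] {n : ℕ} (f : Fin n → M) (j : ℕ) : M :=
  ∏ k : Fin n, if j ≤ (k : ℕ) then f k else 1

section AddCommMonoid

variable [AddCommMonoid M] {N : ℕ}

lemma prefixSum_zero (z : Fin (N + 1) → M) : prefixSum z 0 = z 0 := by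
  simp [prefixSum]

lemma prefixSum_succ (z : Fin N → M) {m : ℕ} (h : m + 1 < N) :
    prefixSum z (m + 1) = prefixSum z m + z ⟨m + 1, h⟩ := by
  rw [prefixSum, prefixSum, ← Fintype.sum_ite_eq' (⟨m + 1, h⟩ : Fin N) z,
    ← Finset.sum_add_distrib]
  refine Finset.sum_congr rfl fun i _ => ?_
  split_ifs <;> simp_all [Fin.ext_iff] <;> omega

lemma prefixSum_of_le (z : Fin N → M) {m : ℕ} (h : N ≤ m + 1) : prefixSum z m = ∑ i, z i :=
  Finset.sum_congr rfl fun i _ => if_pos (by omega)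

end AddCommMonoid

section CommMonoid

variable [CommMonoid M] {n : ℕ}

lemma suffixProd_zero (f : Fin n → M) : suffixProd f 0 = ∏ k, f k :=
  Finset.prod_congr rfl fun k _ => if_pos k.val.zero_le

lemma suffixProd_of_le (f : Fin n → M) {j : ℕ} (h : n ≤ j) : suffixProd f j = 1 :=
  Finset.prod_eq_one fun k _ => if_neg (by omega)

lemma suffixProd_of_lt (f : Fin n → M) {j : ℕ} (h : j < n) :
    suffixProd f j = f ⟨j, h⟩ * suffixProd f (j + 1) := by
  rw [suffixProd, suffixProd, ← Fintype.prod_ite_eq' (⟨j, h⟩ : Fin n) f,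
    ← Finset.prod_mul_distrib]
  refine Finset.prod_congr rfl fun k _ => ?_
  split_ifs <;> simp_all [Fin.ext_iff] <;> omega

end CommMonoid

lemma suffixProd_ne_zero [CommMonoidWithZero M] [NoZeroDivisors M] [Nontrivial M] {n : ℕ}
    {f : Fin n → M} (hf : ∀ k, f k ≠ 0) (j : ℕ) : suffixProd f j ≠ 0 :=
  Finset.prod_ne_zero_iff.2 fun k _ => by split_ifs <;> simp [hf]

lemma suffixProd_div_telescope [CommGroupWithZero M] {n j : ℕ} (g : ℕ → M)
    (hg : ∀ k ≤ n, g k ≠ 0) (hj : j ≤ n) :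
    suffixProd (fun k : Fin n => g k / g (k + 1)) j = g j / g n := by
  induction hj using Nat.decreasingInduction with
  | self => rw [suffixProd_of_le _ le_rfl, div_self (hg n le_rfl)]
  | of_succ k hk ih => rw [suffixProd_of_lt _ hk, ih, div_mul_div_cancel₀ (hg (k + 1) hk)]

end PrefixSuffix

noncomputable section Maps

variable {n : ℕ} (p : MvPolynomial (Fin n) ℂ)

/-- Indices are 0-based: `tCoord z k` is the paper's `t_{k+1} = ε_k(z)/z_{k+1}`. -/
def tCoord (z : Fin (n + 2) → ℂ) (k : Fin n) : ℂ :=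
  prefixSum z k / z ⟨k + 1, by omega⟩

def psi (z : Fin (n + 2) → ℂ) : (Fin n → ℂ) × ℂ :=
  (tCoord z, z (Fin.last _) / (1 - z (Fin.last _)) * eval (tCoord z) p)

def phi (x : (Fin n → ℂ) × ℂ) (i : Fin (n + 2)) : ℂ :=
  if h0 : (i : ℕ) = 0 then
    (∏ k, x.1 k / (1 + x.1 k)) * (eval x.1 p / (eval x.1 p + x.2))
  else if h : (i : ℕ) ≤ n then
    1 / (1 + x.1 ⟨i - 1, Nat.sub_one_lt_of_le (Nat.pos_of_ne_zero h0) h⟩) *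
      suffixProd (fun k => x.1 k / (1 + x.1 k)) i * (eval x.1 p / (eval x.1 p + x.2))
  else x.2 / (eval x.1 p + x.2)

def psiDomain : Set (Fin (n + 2) → ℂ) :=
  {z | (∑ i, z i) = 1 ∧ (∀ i, z i ≠ 0) ∧ (∀ k : Fin (n + 2), prefixSum z k ≠ 0) ∧
    eval (tCoord z) p ≠ 0}

def phiDomain : Set ((Fin n → ℂ) × ℂ) :=
  {x | (∀ i, x.1 i ≠ 0) ∧ eval x.1 p ≠ 0 ∧ x.2 ≠ 0 ∧ (∀ i, 1 + x.1 i ≠ 0) ∧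
    eval x.1 p + x.2 ≠ 0}

section Phi

variable (t : Fin n → ℂ) (lam : ℂ)

lemma phi_zero : phi p (t, lam) 0 =
    suffixProd (fun k => t k / (1 + t k)) 0 * (eval t p / (eval t p + lam)) := by
  simp [phi, suffixProd_zero]

lemma phi_succ {j : ℕ} (hj : j < n) : phi p (t, lam) ⟨j + 1, by omega⟩ =
    suffixProd (fun k => t k / (1 + t k)) (j + 1) * (eval t p / (eval t p + lam)) /
      (1 + t ⟨j, hj⟩) := by
  simp only [phi, Nat.add_sub_cancel, dif_neg (Nat.succ_ne_zero j), dif_pos (Nat.succ_le_of_lt hj)]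
  ring

lemma phi_last : phi p (t, lam) (Fin.last _) = lam / (eval t p + lam) := by
  simp [phi]

variable {t}

lemma prefixSum_phi (h1 : ∀ k, 1 + t k ≠ 0) {j : ℕ} (hj : j ≤ n) :
    prefixSum (phi p (t, lam)) j =
      suffixProd (fun k => t k / (1 + t k)) j * (eval t p / (eval t p + lam)) := by
  induction j with
  | zero => rw [prefixSum_zero, phi_zero]
  | succ j ih =>
    rw [prefixSum_succ _ (by omega), ih (by omega), phi_succ _ _ _ (by omega),
      suffixProd_of_lt _ (by omega : j < n)]
    have := h1 ⟨j, by omega⟩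
    field_simp
    ring

lemma sum_phi (h1 : ∀ k, 1 + t k ≠ 0) (hpl : eval t p + lam ≠ 0) :
    ∑ i, phi p (t, lam) i = 1 := by
  rw [← prefixSum_of_le _ le_rfl, prefixSum_succ _ (by omega), prefixSum_phi p lam h1 le_rfl,
    suffixProd_of_le _ le_rfl, show (⟨n + 1, _⟩ : Fin (n + 2)) = Fin.last _ from rfl, phi_last]
  field_simp

lemma tCoord_phi (ht : ∀ k, t k ≠ 0) (h1 : ∀ k, 1 + t k ≠ 0) (hp : eval t p ≠ 0)
    (hpl : eval t p + lam ≠ 0) : tCoord (phi p (t, lam)) = t := by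
  funext k
  have hw := suffixProd_ne_zero (fun k => div_ne_zero (ht k) (h1 k)) (k + 1)
  have := h1 k
  rw [tCoord, prefixSum_phi p lam h1 k.isLt.le, phi_succ _ _ _ k.isLt,
    suffixProd_of_lt _ k.isLt]
  field_simp

lemma phi_ne_zero (hx : (t, lam) ∈ phiDomain p) (i : Fin (n + 2)) : phi p (t, lam) i ≠ 0 := by
  obtain ⟨ht, hp, hlam, h1, hpl⟩ := hx
  have hw := suffixProd_ne_zero (fun k => div_ne_zero (ht k) (h1 k))
  have hc : eval t p / (eval t p + lam) ≠ 0 := div_ne_zero hp hpl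
  obtain ⟨_ | j, hi⟩ := i
  · rw [show (⟨0, hi⟩ : Fin (n + 2)) = 0 from rfl, phi_zero]
    exact mul_ne_zero (hw 0) hc
  · rcases Nat.lt_or_ge j n with hj | hj
    · rw [phi_succ _ _ _ hj]
      exact div_ne_zero (mul_ne_zero (hw _) hc) (h1 _)
    · rw [show (⟨j + 1, hi⟩ : Fin (n + 2)) = Fin.last _ from Fin.ext (by simp; omega), phi_last]
      exact div_ne_zero hlam hpl

lemma phi_mem_psiDomain (hx : (t, lam) ∈ phiDomain p) : phi p (t, lam) ∈ psiDomain p := by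
  obtain ⟨ht, hp, hlam, h1, hpl⟩ := hx
  refine ⟨sum_phi p lam h1 hpl, phi_ne_zero p lam ⟨ht, hp, hlam, h1, hpl⟩, fun k => ?_, ?_⟩
  · rcases Nat.lt_or_ge (k : ℕ) (n + 1) with hk | hk
    · rw [prefixSum_phi p lam h1 (by omega)]
      exact mul_ne_zero (suffixProd_ne_zero (fun k => div_ne_zero (ht k) (h1 k)) _)
        (div_ne_zero hp hpl)
    · rw [prefixSum_of_le _ (by omega), sum_phi p lam h1 hpl]
      exact one_ne_zero
  · rwa [tCoord_phi p lam ht h1 hp hpl]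

lemma psi_phi (hx : (t, lam) ∈ phiDomain p) : psi p (phi p (t, lam)) = (t, lam) := by
  obtain ⟨ht, hp, -, h1, hpl⟩ := hx
  dsimp only at ht hp h1 hpl
  rw [psi, tCoord_phi p lam ht h1 hp hpl, phi_last]
  have hc : 1 - lam / (eval t p + lam) = eval t p / (eval t p + lam) := by
    field_simp
    ring
  rw [hc]
  congr 1
  field_simp

end Phi

section Psi

variable {z : Fin (n + 2) → ℂ}

lemma one_add_tCoord (k : Fin n) (hz : z ⟨k + 1, by omega⟩ ≠ 0) :
    1 + tCoord z k = prefixSum z (k + 1) / z ⟨k + 1, by omega⟩ := by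
  rw [tCoord, prefixSum_succ _ (by omega)]
  field_simp
  ring

lemma tCoord_div_one_add_tCoord (hz : ∀ i, z i ≠ 0) (hε : ∀ k : Fin (n + 2), prefixSum z k ≠ 0)
    (k : Fin n) : tCoord z k / (1 + tCoord z k) = prefixSum z k / prefixSum z (k + 1) := by
  have := hz ⟨k + 1, by omega⟩
  have := hε ⟨k + 1, by omega⟩
  rw [one_add_tCoord k (hz _), tCoord]
  field_simp

lemma suffixProd_tCoord (hz : ∀ i, z i ≠ 0) (hε : ∀ k : Fin (n + 2), prefixSum z k ≠ 0)
    {j : ℕ} (hj : j ≤ n) :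
    suffixProd (fun k => tCoord z k / (1 + tCoord z k)) j = prefixSum z j / prefixSum z n := by
  simp_rw [tCoord_div_one_add_tCoord hz hε]
  exact suffixProd_div_telescope (prefixSum z) (fun k hk => hε ⟨k, by omega⟩) hj

lemma one_sub_last (hsum : ∑ i, z i = 1) : 1 - z (Fin.last _) = prefixSum z n := by
  rw [← hsum, ← prefixSum_of_le z le_rfl, prefixSum_succ _ (by omega)]
  exact add_sub_cancel_right _ _

lemma psi_eq (hsum : ∑ i, z i = 1) :
    psi p z = (tCoord z, z (Fin.last _) / prefixSum z n * eval (tCoord z) p) := by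
  rw [psi, one_sub_last hsum]

lemma eval_add_psi_snd (hsum : ∑ i, z i = 1) (hεn : prefixSum z n ≠ 0) :
    eval (tCoord z) p + (psi p z).2 = eval (tCoord z) p / prefixSum z n := by
  rw [psi_eq p hsum]
  field_simp
  linear_combination -eval (tCoord z) p * one_sub_last hsum

lemma phi_psi (hz : z ∈ psiDomain p) : phi p (psi p z) = z := by
  obtain ⟨hsum, hz0, hε, hp⟩ := hz
  have hεn : prefixSum z n ≠ 0 := hε ⟨n, by omega⟩
  have hpl := eval_add_psi_snd p hsum hεn
  rw [psi_eq p hsum] at hpl ⊢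
  funext i
  obtain ⟨_ | j, hi⟩ := i
  · rw [show (⟨0, hi⟩ : Fin (n + 2)) = 0 from rfl, phi_zero,
      suffixProd_tCoord hz0 hε (Nat.zero_le _), hpl, prefixSum_zero]
    field_simp
  · rcases Nat.lt_or_ge j n with hj | hj
    · rw [phi_succ _ _ _ hj, suffixProd_tCoord hz0 hε hj, hpl, one_add_tCoord ⟨j, hj⟩ (hz0 _)]
      have := hε ⟨j + 1, by omega⟩
      field_simp
    · rw [show (⟨j + 1, hi⟩ : Fin (n + 2)) = Fin.last _ from Fin.ext (by simp; omega), phi_last,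
        hpl]
      field_simp

lemma psi_mem_phiDomain (hz : z ∈ psiDomain p) : psi p z ∈ phiDomain p := by
  obtain ⟨hsum, hz0, hε, hp⟩ := hz
  have hεn : prefixSum z n ≠ 0 := hε ⟨n, by omega⟩
  have hpl := eval_add_psi_snd p hsum hεn
  rw [psi_eq p hsum] at hpl ⊢
  refine ⟨fun k => ?_, hp, mul_ne_zero (div_ne_zero (hz0 _) hεn) hp, fun k => ?_, ?_⟩
  · exact div_ne_zero (hε ⟨k, by omega⟩) (hz0 _)
  · rw [one_add_tCoord k (hz0 _)]
    exact div_ne_zero (hε ⟨k + 1, by omega⟩) (hz0 _)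
  · rw [hpl]
    exact div_ne_zero hp hεn

end Psi

end Maps

/-- The explicit map `φ` is a two-sided inverse of
`ψ(z) = (t(z); (z_{n+1}/(1−z_{n+1}))p(t(z)))` between `U_p − 𝒢_p` (the set `A`) and
`Δ^{n+1} − Y_p` (the set `B`, described by `∑ z = 1`, `z_i ≠ 0`, `ε_k(z) ≠ 0`, and
`p(t(z)) ≠ 0`); in particular the image of `ψ` is `U_p − 𝒢_p`. -/
theorem stmt_10 (n : ℕ) (p : MvPolynomial (Fin n) ℂ)
    (eps : Fin (n+2) → (Fin (n+2) → ℂ) → ℂ)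
    (heps : ∀ k z, eps k z = ∑ i : Fin (n+2), if (i : ℕ) ≤ (k : ℕ) then z i else 0)
    (tz : (Fin (n+2) → ℂ) → Fin n → ℂ)
    (htz : ∀ z k, tz z k =
      (∑ i : Fin (n+2), if (i : ℕ) ≤ (k : ℕ) then z i else 0) /
        z ⟨(k : ℕ) + 1, by have := k.isLt; omega⟩)
    (ψ : (Fin (n+2) → ℂ) → (Fin n → ℂ) × ℂ)
    (hψ : ∀ z, ψ z = (tz z,
      z ⟨n+1, by omega⟩ / (1 - z ⟨n+1, by omega⟩) * eval (tz z) p))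
    (φ : (Fin n → ℂ) × ℂ → Fin (n+2) → ℂ)
    (hφ : ∀ x (i : Fin (n+2)), φ x i =
      if _h0 : (i : ℕ) = 0 then
        (∏ k : Fin n, x.1 k / (1 + x.1 k)) * (eval x.1 p / (eval x.1 p + x.2))
      else if _h : (i : ℕ) ≤ n then
        (1 / (1 + x.1 ⟨(i : ℕ) - 1, by omega⟩)) *
          (∏ k : Fin n, if (i : ℕ) ≤ (k : ℕ) then x.1 k / (1 + x.1 k) else 1) *
          (eval x.1 p / (eval x.1 p + x.2))
      else x.2 / (eval x.1 p + x.2))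
    (A : Set ((Fin n → ℂ) × ℂ))
    (hA : A = {x | (∀ i, x.1 i ≠ 0) ∧ eval x.1 p ≠ 0 ∧ x.2 ≠ 0 ∧
      (∀ i, 1 + x.1 i ≠ 0) ∧ eval x.1 p + x.2 ≠ 0})
    (B : Set (Fin (n+2) → ℂ))
    (hB : B = {z | (∑ i, z i) = 1 ∧ (∀ i, z i ≠ 0) ∧
      (∀ k, eps k z ≠ 0) ∧ eval (tz z) p ≠ 0}) :
    (∀ x ∈ A, φ x ∈ B ∧ ψ (φ x) = x) ∧ (∀ z ∈ B, ψ z ∈ A ∧ φ (ψ z) = z) := by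
  obtain rfl : eps = fun (k : Fin (n + 2)) z => prefixSum z k := funext₂ heps
  obtain rfl : tz = tCoord := funext₂ htz
  obtain rfl : ψ = psi p := funext hψ
  obtain rfl : φ = phi p := funext₂ hφ
  subst hA hB
  exact ⟨fun x hx => ⟨phi_mem_psiDomain p x.2 hx, psi_phi p x.2 hx⟩,
    fun z hz => ⟨psi_mem_phiDomain p hz, phi_psi p hz⟩⟩
end
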